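/- If R is an additively periodic ring, then the full matrix ring M_n(R) is additively periodic: every matrix is the sum of a strictly upper triangular matrix, a strictly lower triangular matrix (both nilpotent, hence periodic), and a diagonal matrix that is a finite sum of periodic diagonal matrices. -/

import Mathlib

/-- An element of a ring is periodic if `x ^ n = x ^ m` for some `n > m ≥ 1`. -/
def IsPeriodicElem {R : Type*} [Ring R] (x : R) : Prop :=
  ∃ n m : ℕ, 1 ≤ m ∧ m < n ∧ x ^ n = x ^ m

/-- A ring is additively periodic if every element is a finite sum of periodic elements. -/
def AdditivelyPeriodic (R : Type*) [Ring R] : Prop :=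
  ∀ a : R, ∃ l : List R, (∀ x ∈ l, IsPeriodicElem x) ∧ l.sum = a

/-!
Write a matrix as the sum of its matrix units `single i j (a i j)`. Off the diagonal these square
to zero. On the diagonal, `x ↦ single i i x` is additive and commutes with positive powers, so it
turns a decomposition of `a i i` into periodic elements into one of `single i i (a i i)`.
-/

section
variable {R : Type*} [Ring R]

theorem IsNilpotent.isPeriodicElem {x : R} (hx : IsNilpotent x) : IsPeriodicElem x := by
  obtain ⟨k, hk⟩ := hx
  exact ⟨k + 2, k + 1, by omega, by omega,
    by rw [pow_eq_zero_of_le (by omega) hk, pow_eq_zero_of_le (by omega) hk]⟩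

theorem additivelyPeriodic_iff_closure_eq_top :
    AdditivelyPeriodic R ↔ AddSubmonoid.closure {x : R | IsPeriodicElem x} = ⊤ := by
  simp [AdditivelyPeriodic, AddSubmonoid.eq_top_iff', ← SetLike.mem_coe,
    AddSubmonoid.closure_eq_image_sum]

end

namespace Matrix

variable {n R : Type*} [DecidableEq n] [Fintype n]

theorem single_self_pow [Semiring R] (i : n) (x : R) {k : ℕ} (hk : k ≠ 0) :
    single i i x ^ k = single i i (x ^ k) := by
  obtain ⟨k, rfl⟩ := Nat.exists_eq_add_one_of_ne_zero hk
  induction k with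
  | zero => simp
  | succ k ih => rw [pow_succ, ih k.succ_ne_zero, single_mul_single_same, ← pow_succ]

variable [Ring R]

theorem isPeriodicElem_single_self {x : R} (hx : IsPeriodicElem x) (i : n) :
    IsPeriodicElem (single i i x) := by
  obtain ⟨k, l, hl, hlk, hx⟩ := hx
  exact ⟨k, l, hl, hlk, by rw [single_self_pow _ _ (by omega), single_self_pow _ _ (by omega), hx]⟩

theorem isPeriodicElem_single_of_ne {i j : n} (hij : i ≠ j) (x : R) :
    IsPeriodicElem (single i j x) :=
  IsNilpotent.isPeriodicElem ⟨2, (sq _).trans (single_mul_single_of_ne x i j i hij.symm x)⟩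

theorem single_mem_closure_isPeriodicElem
    (h : AddSubmonoid.closure {x : R | IsPeriodicElem x} = ⊤) (i j : n) (x : R) :
    single i j x ∈ AddSubmonoid.closure {M : Matrix n n R | IsPeriodicElem M} := by
  obtain rfl | hij := eq_or_ne i j
  · have hx : x ∈ AddSubmonoid.closure {x : R | IsPeriodicElem x} := h ▸ AddSubmonoid.mem_top x
    have hmap := AddSubmonoid.mem_map_of_mem (singleAddMonoidHom i i) hx
    rw [AddMonoidHom.map_mclosure] at hmap
    refine AddSubmonoid.closure_mono ?_ hmap
    rintro _ ⟨y, hy, rfl⟩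
    exact isPeriodicElem_single_self hy i
  · exact AddSubmonoid.subset_closure (isPeriodicElem_single_of_ne hij x)

end Matrix

theorem matrix_ring_additively_periodic {R : Type*} [Ring R] (n : ℕ)
    (h : AdditivelyPeriodic R) :
    AdditivelyPeriodic (Matrix (Fin n) (Fin n) R) := by
  rw [additivelyPeriodic_iff_closure_eq_top] at h ⊢
  refine (AddSubmonoid.eq_top_iff' _).mpr fun a => ?_
  rw [Matrix.matrix_eq_sum_single a]
  exact sum_mem fun i _ => sum_mem fun j _ => Matrix.single_mem_closure_isPeriodicElem h i j _
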